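/- Let C_1 ≥ C_2 ≥ ... ≥ C_S > 0 and γ > 0. Consider the recursion E_1 = γ/C_{S} and E_j = (1/C_{S-j+1})(γ + ∑_{k=1}^{j-1} E_k (C_{S-k} - C_{S-k+1})) for the special case where all users transmit the same amount γ. Then E_j ≤ E_{j+1} for all j, i.e. E_1 ≤ E_2 ≤ ... ≤ E_S. -/

import Mathlib

open Finset

/-- In the symmetric case where all users transmit the same amount `γ`, the expected
stopping times `E_j` are nondecreasing in the decoding order `j`. -/
theorem stmt_10 (S : ℕ) (hS : 1 ≤ S) (C : ℕ → ℝ) (γ : ℝ) (hγ : 0 < γ)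
    (hCmono : ∀ i j, 1 ≤ i → i ≤ j → j ≤ S → C j ≤ C i)
    (hCpos : 0 < C S)
    (E : ℕ → ℝ)
    (hE1 : E 1 = γ / C S)
    (hErec : ∀ j, 2 ≤ j → j ≤ S →
      E j = (1 / C (S - j + 1)) *
        (γ + ∑ k ∈ Finset.Icc 1 (j - 1), E k * (C (S - k) - C (S - k + 1)))) :
    ∀ j, 1 ≤ j → j < S → E j ≤ E (j + 1) := by
  have key : ∀ j, 1 ≤ j → j ≤ S →
      E j * C (S - j + 1) = γ + ∑ k ∈ Finset.Icc 1 (j - 1), E k * (C (S - k) - C (S - k + 1)) := by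
    intro j hj1 hjS
    rcases eq_or_lt_of_le hj1 with h | h
    · subst h
      have hs : S - 1 + 1 = S := Nat.succ_pred_eq_of_pos hS
      rw [hs, hE1]
      simp [div_mul_cancel₀ γ hCpos.ne']
    · have h2 : 2 ≤ j := h
      have hpos : 0 < C (S - j + 1) := by
        refine lt_of_lt_of_le hCpos (hCmono (S - j + 1) S (by omega) (by omega) le_rfl)
      rw [hErec j h2 hjS]
      field_simp
  intro j hj hjS
  have hc : 0 < C (S - j) :=
    lt_of_lt_of_le hCpos (hCmono (S - j) S (by omega) (by omega) le_rfl)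
  have e1 := key j hj (le_of_lt hjS)
  have e2 := key (j + 1) (by omega) hjS
  have hidx : S - (j + 1) + 1 = S - j := by omega
  rw [hidx, Nat.add_sub_cancel] at e2
  have hsplit : ∑ k ∈ Finset.Icc 1 j, E k * (C (S - k) - C (S - k + 1))
      = (∑ k ∈ Finset.Icc 1 (j - 1), E k * (C (S - k) - C (S - k + 1)))
        + E j * (C (S - j) - C (S - j + 1)) := by
    conv_lhs => rw [show j = j - 1 + 1 by omega]
    rw [Finset.sum_Icc_succ_top (by omega : 1 ≤ (j - 1) + 1),
        (show j - 1 + 1 = j by omega)]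
  rw [hsplit] at e2
  have e3 : E (j + 1) * C (S - j) = E j * C (S - j) := by
    linear_combination e2 - e1
  exact le_of_eq (mul_right_cancel₀ hc.ne' e3).symm
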